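/- arXiv:2408.16616 — 2 statements merged into one kernel-verified Lean document; each statement's English description precedes it below -/
import Mathlib

section
/- Let p be a prime and let T : ℕ → ℤ be a sequence with T(0) = 1. Let Z(t) = ∑_{n≥0} T(n) t^n be its generating power series over ℤ/pℤ, and let Z_[p](t) = ∑_{n=0}^{p-1} T(n) t^n be its p-truncation. If Z(t) ≡ Z_[p](t) · Z(t^p) (mod p) as formal power series over ℤ/pℤ, then T satisfies the Lucas congruences modulo p: for every n with base-p expansion n = n_0 + n_1 p + ... + n_s p^s (each 0 ≤ n_i ≤ p-1), one has T(n) ≡ T(n_0) T(n_1) ⋯ T(n_s) (mod p). -/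
/-- The sequence `T` satisfies the Lucas congruences modulo `p`:
for `n` with base-`p` digits `n₀, …, n_s`, `T n ≡ T n₀ ⋯ T n_s (mod p)`. -/
def LucasCongruence (p : ℕ) (T : ℕ → ℤ) : Prop :=
  ∀ n : ℕ, ((T n : ZMod p)) = ((Nat.digits p n).map fun d => ((T d : ZMod p))).prod

/-- Substitution `t ↦ t^p` in a formal power series. -/
noncomputable def psExpand (p : ℕ) {R : Type*} [Semiring R] (f : PowerSeries R) :
    PowerSeries R :=
  PowerSeries.mk fun n => if p ∣ n then PowerSeries.coeff (n / p) f else 0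

theorem lucas_of_series_factorization (p : ℕ) (hp : p.Prime) (T : ℕ → ℤ) (hT0 : T 0 = 1)
    (Z : PowerSeries (ZMod p)) (hZ : Z = PowerSeries.mk fun n => ((T n : ZMod p)))
    (hfac : Z = ((PowerSeries.trunc p Z : Polynomial (ZMod p)) : PowerSeries (ZMod p))
        * psExpand p Z) :
    LucasCongruence p T := by
  have hp1 : 1 < p := hp.one_lt
  have hp0 : 0 < p := hp.pos
  -- key step: T n = T (n % p) * T (n / p) in ZMod p
  have key : ∀ n : ℕ, ((T n : ZMod p)) = (T (n % p) : ZMod p) * (T (n / p) : ZMod p) := by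
    intro n
    have h := congrArg (PowerSeries.coeff n) hfac
    rw [PowerSeries.coeff_mul] at h
    have hs : ∑ x ∈ Finset.HasAntidiagonal.antidiagonal n,
        (PowerSeries.coeff x.1)
          ((PowerSeries.trunc p Z : Polynomial (ZMod p)) : PowerSeries (ZMod p)) *
          (PowerSeries.coeff x.2) (psExpand p Z)
        = (T (n % p) : ZMod p) * (T (n / p) : ZMod p) := by
      rw [Finset.sum_eq_single (n % p, p * (n / p))]
      · rw [Polynomial.coeff_coe, PowerSeries.coeff_trunc]
        simp only [psExpand, PowerSeries.coeff_mk]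
        rw [if_pos (Nat.mod_lt n hp0), if_pos (Dvd.intro _ rfl),
          Nat.mul_div_cancel_left _ hp0, hZ]
        simp
      · rintro ⟨a, b⟩ hab hne
        rw [Finset.HasAntidiagonal.mem_antidiagonal] at hab
        simp only at hab
        rw [Polynomial.coeff_coe, PowerSeries.coeff_trunc]
        by_cases ha : a < p
        · rw [if_pos ha]
          simp only [psExpand, PowerSeries.coeff_mk]
          by_cases hb : p ∣ b
          · exfalso
            apply hne
            obtain ⟨c, rfl⟩ := hb
            have ha' : a = n % p := by
              rw [← hab, Nat.add_mul_mod_self_left, Nat.mod_eq_of_lt ha]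
            have hc : c = n / p := by
              rw [← hab, Nat.add_mul_div_left _ _ hp0, Nat.div_eq_of_lt ha, zero_add]
            rw [ha', hc]
          · rw [if_neg hb, mul_zero]
        · rw [if_neg ha, zero_mul]
      · intro hmem
        exact (hmem (Finset.HasAntidiagonal.mem_antidiagonal.mpr (Nat.mod_add_div n p))).elim
    rw [hs, hZ] at h
    simpa using h
  intro n
  induction n using Nat.strong_induction_on with
  | _ n ih =>
    rcases Nat.eq_zero_or_pos n with rfl | hn
    · simp [hT0]
    · rw [Nat.digits_def' hp1 hn, List.map_cons, List.prod_cons, key n,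
        ih (n / p) (Nat.div_lt_self hn hp1)]
end

section
/- For every integer m ≥ 1, the normalized Eisenstein series E_{2^m}(τ) = 1 + (2·2^m / B_{2^m}) ∑_{n≥1} n^{2^m−1} q^n/(1−q^n) has all its non-constant q-expansion coefficients divisible by 2^{m+1}; equivalently E_{2^m} ≡ 1 (mod 2^{m+1}) as a q-series with rational coefficients that are 2-integral. -/
open Finset

private lemma padicNorm_pow2 (q : ℚ) (k : ℕ) :
    padicNorm 2 (q ^ k) = padicNorm 2 q ^ k := by
  induction k with
  | zero => simp
  | succ k ih => rw [pow_succ, pow_succ, padicNorm.mul, ih]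

/-- `padicNorm 2 (2^(j-1)/j) = (2⁻¹)^(j-1-v₂(j))`. -/
private lemma norm_two_pow_div (j : ℕ) (hj : 2 ≤ j) :
    padicNorm 2 ((2:ℚ) ^ (j-1) / j) = (2:ℚ)⁻¹ ^ (j - 1 - j.factorization 2) := by
  have hj0 : j ≠ 0 := by omega
  set v := j.factorization 2 with hv
  have hdecomp : (2:ℕ) ^ v * (j / 2 ^ v) = j := Nat.ordProj_mul_ordCompl_eq_self j 2
  set u := j / 2 ^ v with hu
  have hodd : ¬ (2 ∣ u) := Nat.not_dvd_ordCompl Nat.prime_two hj0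
  have hvle : v ≤ j - 1 := by
    have h1 : 2 ^ v ≤ j := Nat.ordProj_le 2 hj0
    have h2 : v < 2 ^ v := Nat.lt_two_pow_self
    omega
  have hqdecomp : (j : ℚ) = 2 ^ v * u := by
    rw [← hdecomp]; push_cast; ring
  have hsplit : (2:ℚ) ^ (j-1) = 2 ^ (j - 1 - v) * 2 ^ v := by
    rw [← pow_add]; congr 1; omega
  have hu1 : padicNorm 2 (u : ℚ) = 1 := (padicNorm.nat_eq_one_iff (p := 2) u).mpr hodd
  rw [hqdecomp, hsplit, padicNorm.div, padicNorm.mul, padicNorm.mul, hu1, mul_one,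
    padicNorm_pow2, padicNorm_pow2]
  have h2 : padicNorm 2 (2:ℚ) = 2⁻¹ := by
    simpa using padicNorm.padicNorm_p (p := 2) (by norm_num)
  rw [h2]
  rw [mul_div_assoc, div_self (by positivity), mul_one]

private lemma norm_two_pow_div_le_one (j : ℕ) (hj : 2 ≤ j) :
    padicNorm 2 ((2:ℚ) ^ (j-1) / j) ≤ 1 := by
  rw [norm_two_pow_div j hj]
  exact pow_le_one₀ (by norm_num) (by norm_num)

private lemma norm_two_pow_div_le_half (j : ℕ) (hj : 3 ≤ j) :
    padicNorm 2 ((2:ℚ) ^ (j-1) / j) ≤ 1/2 := by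
  rw [norm_two_pow_div j (by omega)]
  have hv : j.factorization 2 ≤ j - 2 := by
    set v := j.factorization 2 with hv
    have h1 : 2 ^ v ≤ j := Nat.ordProj_le 2 (by omega)
    rcases Nat.lt_or_ge v 2 with h | h
    · interval_cases v <;> omega
    · have h2 : v - 1 < 2 ^ (v-1) := Nat.lt_two_pow_self
      have h3 : 2 * 2 ^ (v-1) = 2 ^ v := by
        rw [← pow_succ']; congr 1; omega
      omega
  calc (2:ℚ)⁻¹ ^ (j - 1 - j.factorization 2)
      ≤ (2:ℚ)⁻¹ ^ 1 := pow_le_pow_of_le_one (by norm_num) (by norm_num) (by omega)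
    _ = 1/2 := by norm_num

/-- The key recursion: for `1 ≤ p`,
`2 * bernoulli p = 1 - ∑_{i<p} (2 * bernoulli i) * C(p,i) * (2^(p-i) / (p+1-i))`. -/
private lemma two_bernoulli_eq (p : ℕ) (hp : 1 ≤ p) :
    2 * bernoulli p =
      1 - ∑ i ∈ range p,
        (2 * bernoulli i) * ((p.choose i : ℚ)) * ((2:ℚ) ^ (p - i) / (p + 1 - i)) := by
  have h := sum_range_pow 2 p
  have hlhs : (∑ k ∈ range 2, (k : ℚ) ^ p) = 1 := by
    rw [show (2:ℕ) = 0 + 1 + 1 by rfl]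
    rw [Finset.sum_range_succ, Finset.sum_range_succ, Finset.sum_range_zero]
    simp [zero_pow (by omega : p ≠ 0)]
  rw [hlhs, Finset.sum_range_succ] at h
  have hlast : bernoulli p * ((p + 1).choose p : ℚ) * (2:ℕ) ^ (p + 1 - p) / (p + 1)
      = 2 * bernoulli p := by
    rw [Nat.choose_succ_self_right, show p + 1 - p = 1 by omega]
    have : ((p:ℚ) + 1) ≠ 0 := by positivity
    push_cast
    field_simp
  rw [hlast] at h
  have hterm : ∀ i ∈ range p,
      bernoulli i * ((p + 1).choose i : ℚ) * (2:ℕ) ^ (p + 1 - i) / (p + 1)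
        = (2 * bernoulli i) * ((p.choose i : ℚ)) * ((2:ℚ) ^ (p - i) / (p + 1 - i)) := by
    intro i hi
    rw [Finset.mem_range] at hi
    have hchoose : (p.choose i : ℚ) * ((p:ℚ) + 1) = ((p+1).choose i : ℚ) * ((p:ℚ) + 1 - i) := by
      rw [show ((p:ℚ) + 1 - i) = ((p + 1 - i : ℕ) : ℚ) by
        push_cast [Nat.cast_sub (by omega : i ≤ p + 1)]; ring]
      exact_mod_cast Nat.choose_mul_succ_eq p i
    have h1 : ((p:ℚ) + 1) ≠ 0 := by positivity
    have h2 : ((p:ℚ) + 1 - i) ≠ 0 := by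
      have : (i:ℚ) < p := by exact_mod_cast hi
      intro hc; nlinarith
    have hpow : ((2:ℕ):ℚ) ^ (p + 1 - i) = 2 * (2:ℚ) ^ (p - i) := by
      push_cast
      rw [show p + 1 - i = (p - i) + 1 by omega, pow_succ]
      ring
    rw [hpow]
    field_simp
    linear_combination (-bernoulli i) * hchoose
  rw [Finset.sum_congr rfl hterm] at h
  linarith [h]

/-- All `2 * bernoulli p` are 2-adically integral. -/
private lemma padicNorm_two_bernoulli_le_one : ∀ p : ℕ, padicNorm 2 (2 * bernoulli p) ≤ 1 := by
  intro p
  induction p using Nat.strong_induction_on with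
  | _ p ih =>
    rcases Nat.eq_zero_or_pos p with rfl | hp
    · have he : (2:ℚ) * bernoulli 0 = 2 := by simp
      have h2 : padicNorm 2 (2:ℚ) = 2⁻¹ := by
        simpa using padicNorm.padicNorm_p (p := 2) (by norm_num)
      rw [he, h2]; norm_num
    · rw [two_bernoulli_eq p hp]
      refine le_trans padicNorm.sub ?_
      rw [max_le_iff]
      constructor
      · simp
      · refine padicNorm.sum_le' (fun i hi => ?_) (by norm_num)
        rw [Finset.mem_range] at hi
        rw [padicNorm.mul, padicNorm.mul]
        have h1 : padicNorm 2 ((p.choose i : ℚ)) ≤ 1 := padicNorm.of_nat _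
        have h2 : padicNorm 2 ((2:ℚ) ^ (p - i) / ((p:ℚ) + 1 - i)) ≤ 1 := by
          have hcast : ((p:ℚ) + 1 - i) = ((p + 1 - i : ℕ) : ℚ) := by
            push_cast [Nat.cast_sub (by omega : i ≤ p + 1)]; ring
          have hexp : p - i = (p + 1 - i) - 1 := by omega
          rw [hcast, hexp]
          exact norm_two_pow_div_le_one _ (by omega)
        calc padicNorm 2 (2 * bernoulli i) * padicNorm 2 ((p.choose i : ℚ)) *
              padicNorm 2 ((2:ℚ) ^ (p - i) / ((p:ℚ) + 1 - i))
            ≤ 1 * 1 * 1 := by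
              gcongr <;> first
                | exact padicNorm.nonneg _
                | exact ih i hi
                | exact h1
                | exact h2
          _ = 1 := by norm_num

private lemma padicNorm_two' : padicNorm 2 (2:ℚ) = 2⁻¹ := by
  simpa using padicNorm.padicNorm_p (p := 2) (by norm_num)

private lemma padicNorm_two_bernoulli_two_pow (m : ℕ) (hm : 1 ≤ m) :
    padicNorm 2 (2 * bernoulli (2 ^ m)) = 1 := by
  have hp1 : 1 ≤ 2 ^ m := Nat.one_le_two_pow
  set p := 2 ^ m with hpdef
  rw [two_bernoulli_eq p hp1]
  have hS : padicNorm 2 (∑ i ∈ range p,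
      (2 * bernoulli i) * ((p.choose i : ℚ)) * ((2:ℚ) ^ (p - i) / ((p:ℚ) + 1 - i))) ≤ 1/2 := by
    refine padicNorm.sum_le' (fun i hi => ?_) (by norm_num)
    rw [Finset.mem_range] at hi
    rw [padicNorm.mul, padicNorm.mul]
    have hB := padicNorm_two_bernoulli_le_one i
    have hC : padicNorm 2 ((p.choose i : ℚ)) ≤ 1 := padicNorm.of_nat _
    have hcast : ((p:ℚ) + 1 - i) = ((p + 1 - i : ℕ) : ℚ) := by
      push_cast [Nat.cast_sub (by omega : i ≤ p + 1)]; ring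
    have hexp : p - i = (p + 1 - i) - 1 := by omega
    have hD1 : padicNorm 2 ((2:ℚ) ^ (p - i) / ((p:ℚ) + 1 - i)) ≤ 1 := by
      rw [hcast, hexp]; exact norm_two_pow_div_le_one _ (by omega)
    rcases Nat.lt_or_ge i (p - 1) with hip | hip
    · -- here p + 1 - i ≥ 3
      have hD : padicNorm 2 ((2:ℚ) ^ (p - i) / ((p:ℚ) + 1 - i)) ≤ 1/2 := by
        rw [hcast, hexp]; exact norm_two_pow_div_le_half _ (by omega)
      calc padicNorm 2 (2 * bernoulli i) * padicNorm 2 ((p.choose i : ℚ)) *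
            padicNorm 2 ((2:ℚ) ^ (p - i) / ((p:ℚ) + 1 - i))
          ≤ 1 * 1 * (1/2) := by
            gcongr <;> first | exact padicNorm.nonneg _ | assumption
        _ = 1/2 := by norm_num
    · -- i = p - 1, the binomial coefficient is p = 2^m
      have hi' : i = p - 1 := by omega
      have hCp : p.choose i = p := by
        rw [hi', show p = (p - 1) + 1 by omega, Nat.succ_sub_one,
          Nat.choose_succ_self_right]
      have hCval : padicNorm 2 ((p.choose i : ℚ)) ≤ 1/2 := by
        rw [hCp, hpdef]
        have : ((2 ^ m : ℕ) : ℚ) = (2:ℚ) ^ m := by push_cast; ring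
        rw [this, padicNorm_pow2, padicNorm_two']
        calc (2:ℚ)⁻¹ ^ m ≤ (2:ℚ)⁻¹ ^ 1 :=
              pow_le_pow_of_le_one (by norm_num) (by norm_num) hm
          _ = 1/2 := by norm_num
      calc padicNorm 2 (2 * bernoulli i) * padicNorm 2 ((p.choose i : ℚ)) *
            padicNorm 2 ((2:ℚ) ^ (p - i) / ((p:ℚ) + 1 - i))
          ≤ 1 * (1/2) * 1 := by
            gcongr <;> first | exact padicNorm.nonneg _ | assumption
        _ = 1/2 := by norm_num
  rw [sub_eq_add_neg, padicNorm.add_eq_max_of_ne]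
  · rw [padicNorm.one, padicNorm.neg]
    exact max_eq_left (le_trans hS (by norm_num))
  · rw [padicNorm.one, padicNorm.neg]
    intro hc
    rw [← hc] at hS
    norm_num at hS

private lemma padicNorm_bernoulli'_two_pow (m : ℕ) (hm : 1 ≤ m) :
    padicNorm 2 (bernoulli' (2 ^ m)) = 2 := by
  have h1 : bernoulli' (2 ^ m) = bernoulli (2 ^ m) := by
    rw [bernoulli_eq_bernoulli'_of_ne_one]
    intro hc
    have := Nat.one_lt_two_pow (n := m) (by omega)
    omega
  have h2 := padicNorm_two_bernoulli_two_pow m hm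
  rw [padicNorm.mul, padicNorm_two'] at h2
  rw [h1]
  have : (2:ℚ)⁻¹ ≠ 0 := by norm_num
  field_simp at h2
  linarith

/-- The `n`-th `q`-expansion coefficient (for `n ≥ 1`) of the normalized Eisenstein
series `E_k = 1 + (2k / B_k) ∑_{n≥1} σ_{k-1}(n) qⁿ`. -/
noncomputable def eisensteinCoeff (k n : ℕ) : ℚ :=
  (2 * k / bernoulli' k) * ∑ d ∈ n.divisors, (d : ℚ) ^ (k - 1)

theorem eisenstein_two_pow_congruent_one (m : ℕ) (hm : 1 ≤ m) :
    ∀ n : ℕ, 1 ≤ n →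
      padicNorm 2 (eisensteinCoeff (2 ^ m) n) ≤ ((2 : ℚ) ^ (m + 1))⁻¹ := by
  intro n hn
  unfold eisensteinCoeff
  have hσ : padicNorm 2 (∑ d ∈ n.divisors, (d : ℚ) ^ (2 ^ m - 1)) ≤ 1 := by
    have : (∑ d ∈ n.divisors, (d : ℚ) ^ (2 ^ m - 1))
        = ((∑ d ∈ n.divisors, d ^ (2 ^ m - 1) : ℕ) : ℚ) := by push_cast; ring
    rw [this]
    exact padicNorm.of_nat _
  have hnum : padicNorm 2 (2 * ((2 ^ m : ℕ) : ℚ)) = (2:ℚ)⁻¹ ^ (m + 1) := by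
    have : ((2 ^ m : ℕ) : ℚ) = (2:ℚ) ^ m := by push_cast; ring
    rw [this, padicNorm.mul, padicNorm_pow2, padicNorm_two', pow_succ]
    ring
  rw [padicNorm.mul, padicNorm.div, hnum, padicNorm_bernoulli'_two_pow m hm]
  have htarget : ((2 : ℚ) ^ (m + 1))⁻¹ = (2:ℚ)⁻¹ ^ (m + 1) := by
    rw [inv_pow]
  rw [htarget]
  have hpos : (0:ℚ) < (2:ℚ)⁻¹ ^ (m + 1) := by positivity
  calc (2:ℚ)⁻¹ ^ (m + 1) / 2 * padicNorm 2 (∑ d ∈ n.divisors, (d : ℚ) ^ (2 ^ m - 1))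
      ≤ (2:ℚ)⁻¹ ^ (m + 1) / 2 * 1 := by
        gcongr
    _ ≤ (2:ℚ)⁻¹ ^ (m + 1) := by
        rw [mul_one]
        linarith
end
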